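/- arXiv:1805.05750 — 3 statements merged into one kernel-verified Lean document; each statement's English description precedes it below -/
import Mathlib

section
/- (Trails telescoping identity) Let X = (X_1, ..., X_n) be a vector of independent, identically distributed random variables over a finite universe U = {x_1, ..., x_c}, and let Hist denote the histogram map. Fix indices j ≠ k, a histogram H, and a length q ≥ 0, and define the trail T = {H - z·e_j + z·e_k : 0 ≤ z ≤ q}. Then for any coordinate i, P(Hist(X) ∈ T | X_i = x_j) − P(Hist(X) ∈ T | X_i = x_k) = P(Hist(X) = H - q·e_j + q·e_k | X_i = x_j) − P(Hist(X) = H | X_i = x_k). -/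
/-!
Changing row `i` from `x_k` to `x_j` is a bijection from `{X_i = x_k}` onto `{X_i = x_j}`; under
the product measure it multiplies the weight of each database by `ν{j}/ν{k}`, the ratio of the
two conditioning probabilities, and it moves the histogram by `e_j - e_k`. Hence the `z`-th point
of the trail conditioned on `x_j` is as likely as the `(z+1)`-st point conditioned on `x_k`.
The trail is the disjoint union of its points, so the difference of the two sums over it
telescopes to the exit conditioned on `x_j` minus the entry conditioned on `x_k`.
-/

open MeasureTheory ProbabilityTheory

/-- Histogram of a finite database: the number of rows holding each value. -/
def hist {ι : Type*} [Fintype ι] {c : ℕ} (ω : ι → Fin c) : Fin c → ℕ :=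
  fun j => (Finset.univ.filter fun i => ω i = j).card

/-- The trail with entry `H`, direction `(j,k)` and length `q`, as a set of
(integer-valued) histograms. -/
def trail {c : ℕ} (H : Fin c → ℤ) (j k : Fin c) (q : ℕ) : Set (Fin c → ℤ) :=
  {h | ∃ z : ℕ, z ≤ q ∧
    h = fun b => H b - (z : ℤ) * (if b = j then 1 else 0) + (z : ℤ) * (if b = k then 1 else 0)}

open Finset Function

theorem Finset.sum_range_succ_sub_sum_range_succ_of_shift {M : Type*} [AddCommGroup M]
    {f g : ℕ → M} (h : ∀ z, f z = g (z + 1)) (q : ℕ) :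
    ∑ z ∈ range (q + 1), f z - ∑ z ∈ range (q + 1), g z = f q - g 0 := by
  rw [sum_range_succ, sum_range_succ', sum_congr rfl fun z _ => h z]
  abel

theorem Finset.prod_comp_update_mul {ι α M : Type*} [Fintype ι] [DecidableEq ι] [CommMonoid M]
    (f : α → M) (ω : ι → α) (i : ι) (a : α) :
    (∏ x, f (update ω i a x)) * f (ω i) = (∏ x, f (ω x)) * f a := by
  simp only [apply_update (fun _ => f), prod_update_of_mem (mem_univ i),
    prod_eq_mul_prod_sdiff_singleton_of_mem (mem_univ i) (fun x => f (ω x))]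
  ac_rfl

section Pi

variable {ι α : Type*} [Fintype ι] [DecidableEq ι] [Fintype α] [MeasurableSpace α]
  [MeasurableSingletonClass α]

theorem measure_pi_inter_eval_mul (ν : Measure α) [SigmaFinite ν] (i : ι) (j k : α)
    (A : Set (ι → α)) :
    Measure.pi (fun _ => ν) ({ω | ω i = j} ∩ A) * ν {k}
      = Measure.pi (fun _ => ν) ({ω | ω i = k} ∩ (update · i j) ⁻¹' A) * ν {j} := by
  classical
  have sum_singletons (S : Set (ι → α)) :
      Measure.pi (fun _ => ν) S = ∑ ω ∈ S.toFinset, Measure.pi (fun _ => ν) {ω} := by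
    rw [sum_measure_singleton, Set.coe_toFinset]
  rw [sum_singletons, sum_singletons, sum_mul, sum_mul]
  refine sum_nbij' (update · i k) (update · i j) ?_ ?_ ?_ ?_ ?_
  all_goals
    intro ω hω
    simp only [Set.mem_toFinset, Set.mem_inter_iff, Set.mem_ofPred_eq, Set.mem_preimage] at hω ⊢
    obtain ⟨rfl, hA⟩ := hω
  · simpa using hA
  · simpa using hA
  · simp
  · simp
  · rw [Measure.pi_singleton, Measure.pi_singleton]
    exact (prod_comp_update_mul (fun a => ν {a}) ω i k).symm

theorem cond_eval_eq_cond_eval_preimage_update (ν : Measure α) [IsProbabilityMeasure ν] (i : ι)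
    {j k : α} (hj : ν {j} ≠ 0) (hk : ν {k} ≠ 0) (A : Set (ι → α)) :
    (Measure.pi fun _ => ν)[|{ω | ω i = j}] A
      = (Measure.pi fun _ => ν)[|{ω | ω i = k}] ((update · i j) ⁻¹' A) := by
  have measure_eval_eq (a : α) : Measure.pi (fun _ => ν) {ω | ω i = a} = ν {a} :=
    (measurePreserving_eval (fun _ => ν) i).measure_preimage
      (measurableSet_singleton a).nullMeasurableSet
  rw [cond_apply (Set.toFinite _).measurableSet, cond_apply (Set.toFinite _).measurableSet,
    measure_eval_eq, measure_eval_eq, ← ENNReal.div_eq_inv_mul, ← ENNReal.div_eq_inv_mul,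
    ENNReal.div_eq_div_iff hk (measure_ne_top _ _) hj (measure_ne_top _ _),
    mul_comm, measure_pi_inter_eval_mul, mul_comm]

end Pi

section Hist

variable {ι : Type*} [Fintype ι] [DecidableEq ι] {c : ℕ}

theorem hist_update_add_single (ω : ι → Fin c) (i : ι) (a : Fin c) :
    hist (update ω i a) + Pi.single (ω i) 1 = hist ω + Pi.single a 1 := by
  ext b
  have hrest : ∑ x ∈ univ \ {i}, (if update ω i a x = b then 1 else 0)
      = ∑ x ∈ univ \ {i}, (if ω x = b then 1 else 0) :=
    sum_congr rfl fun x hx => by rw [update_of_ne (by simpa using hx)]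
  simp only [hist, Pi.add_apply, Pi.single_apply, card_filter,
    sum_eq_add_sum_sdiff_singleton_of_mem (mem_univ i), hrest, update_self]
  split_ifs <;> omega

theorem intCast_hist_update (ω : ι → Fin c) (i : ι) (a : Fin c) :
    (fun b => (hist (update ω i a) b : ℤ))
      = (fun b => (hist ω b : ℤ)) - Pi.single (ω i) 1 + Pi.single a 1 := by
  ext b
  have h := congrFun (hist_update_add_single ω i a) b
  simp only [Pi.add_apply, Pi.sub_apply, Pi.single_apply] at h ⊢
  split_ifs at h ⊢ <;> omega

theorem cond_hist_eq_cond_hist_shift (ν : Measure (Fin c)) [IsProbabilityMeasure ν] (i : ι)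
    {j k : Fin c} (hj : ν {j} ≠ 0) (hk : ν {k} ≠ 0) (t : Fin c → ℤ) :
    (Measure.pi fun _ => ν)[|{ω | ω i = j}] ((fun ω b => (hist ω b : ℤ)) ⁻¹' {t})
      = (Measure.pi fun _ => ν)[|{ω | ω i = k}]
          ((fun ω b => (hist ω b : ℤ)) ⁻¹' {t - Pi.single j 1 + Pi.single k 1}) := by
  have hmeas : MeasurableSet {ω : ι → Fin c | ω i = k} := (Set.toFinite _).measurableSet
  rw [cond_eval_eq_cond_eval_preimage_update ν i hj hk, ← cond_inter_self hmeas,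
    ← cond_inter_self hmeas (_ ⁻¹' _)]
  congr 1
  ext ω
  simp only [Set.mem_inter_iff, Set.mem_ofPred_eq, Set.mem_preimage, Set.mem_singleton_iff,
    and_congr_right_iff, intCast_hist_update]
  rintro rfl
  constructor <;> intro h
  · rw [← h]; abel
  · rw [h]; abel

end Hist

section Trail

variable {c : ℕ} (H : Fin c → ℤ) (j k : Fin c)

def trailPoint (z : ℕ) : Fin c → ℤ :=
  fun b => H b - (z : ℤ) * (if b = j then 1 else 0) + (z : ℤ) * (if b = k then 1 else 0)

theorem trailPoint_zero : trailPoint H j k 0 = H := by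
  ext b
  simp [trailPoint]

theorem trailPoint_succ (z : ℕ) :
    trailPoint H j k (z + 1) = trailPoint H j k z - Pi.single j 1 + Pi.single k 1 := by
  ext b
  simp only [trailPoint, Pi.add_apply, Pi.sub_apply, Pi.single_apply]
  push_cast
  ring

variable {j k}

theorem trailPoint_injective (hjk : j ≠ k) : Injective (trailPoint H j k) := by
  intro z w h
  simpa [trailPoint, hjk] using congrFun h j

theorem trail_eq_image (q : ℕ) :
    trail H j k q = ((range (q + 1)).image (trailPoint H j k) : Set (Fin c → ℤ)) := by
  ext h
  simp only [trail, coe_image, coe_range, Set.mem_image, Set.mem_Iio, Nat.lt_succ_iff,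
    Set.mem_ofPred_eq]
  exact exists_congr fun z => and_congr_right fun _ => eq_comm

theorem measureReal_preimage_trail {Ω : Type*} [MeasurableSpace Ω] (μ : Measure Ω)
    [IsFiniteMeasure μ] {X : Ω → Fin c → ℤ} (hX : Measurable X) (hjk : j ≠ k) (q : ℕ) :
    μ.real (X ⁻¹' trail H j k q) = ∑ z ∈ range (q + 1), μ.real (X ⁻¹' {trailPoint H j k z}) := by
  rw [trail_eq_image, ← sum_measureReal_preimage_singleton _
    fun t _ => hX (measurableSet_singleton t), sum_image (trailPoint_injective H hjk).injOn]

end Trail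

theorem trail_telescoping (n c : ℕ) (ν : Measure (Fin c)) [IsProbabilityMeasure ν]
    (i : Fin n) (j k : Fin c) (hjk : j ≠ k) (hj : ν {j} ≠ 0) (hk : ν {k} ≠ 0)
    (H : Fin c → ℤ) (q : ℕ) :
    ((Measure.pi fun _ : Fin n => ν)[|{ω | ω i = j}]
        {ω | (fun b => (hist ω b : ℤ)) ∈ trail H j k q}).toReal
      - ((Measure.pi fun _ : Fin n => ν)[|{ω | ω i = k}]
        {ω | (fun b => (hist ω b : ℤ)) ∈ trail H j k q}).toReal
    = ((Measure.pi fun _ : Fin n => ν)[|{ω | ω i = j}]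
        {ω | ∀ b, (hist ω b : ℤ)
          = H b - (q : ℤ) * (if b = j then 1 else 0) + (q : ℤ) * (if b = k then 1 else 0)}).toReal
      - ((Measure.pi fun _ : Fin n => ν)[|{ω | ω i = k}]
        {ω | ∀ b, (hist ω b : ℤ) = H b}).toReal := by
  have hX : Measurable fun (ω : Fin n → Fin c) b => (hist ω b : ℤ) := measurable_of_finite _
  have shift (z : ℕ) : (Measure.pi fun _ => ν)[|{ω | ω i = j}].real
        ((fun ω b => (hist ω b : ℤ)) ⁻¹' {trailPoint H j k z})
      = (Measure.pi fun _ => ν)[|{ω | ω i = k}].real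
        ((fun ω b => (hist ω b : ℤ)) ⁻¹' {trailPoint H j k (z + 1)}) := by
    rw [measureReal_def, measureReal_def, trailPoint_succ, cond_hist_eq_cond_hist_shift ν i hj hk]
  have trail_event : {ω : Fin n → Fin c | (fun b => (hist ω b : ℤ)) ∈ trail H j k q}
      = (fun ω b => (hist ω b : ℤ)) ⁻¹' trail H j k q := rfl
  have point_event (t : Fin c → ℤ) :
      {ω : Fin n → Fin c | ∀ b, (hist ω b : ℤ) = t b} = (fun ω b => (hist ω b : ℤ)) ⁻¹' {t} :=
    Set.ext fun _ => funext_iff.symm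
  simp only [← measureReal_def]
  rw [trail_event, point_event, point_event, measureReal_preimage_trail H _ hX hjk,
    measureReal_preimage_trail H _ hX hjk, sum_range_succ_sub_sum_range_succ_of_shift shift,
    trailPoint_zero]
  rfl
end

section
/- (Simulation-based DDP implies alternative DDP) Suppose database distribution X has independent rows and there exists a simulator Sim such that for all i, all x in the support of X_i, and all measurable S: P(M(X) ∈ S | X_i = x) ≤ e^ε P(Sim(X_{-i}) ∈ S | X_i = x) + δ and P(Sim(X_{-i}) ∈ S | X_i = x) ≤ e^ε P(M(X) ∈ S | X_i = x) + δ. Then for all i, all x, x' in the support of X_i, and all S: P(M(X) ∈ S | X_i = x) ≤ e^{2ε} P(M(X) ∈ S | X_i = x') + (1 + e^ε)δ. -/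
/-!
Under the product measure, conditioning on `ω i = x` only fixes row `i`: the remaining rows are
still distributed as the product of their marginals. Hence the law of `Sim i (X_{-i})` given
`X_i = x` is the same for every admissible `x`, and the two simulation inequalities (for `x` and
for `x'`) chain through this common law, which doubles `ε` and turns `δ` into `(1 + e^ε) δ`.
-/

open MeasureTheory ProbabilityTheory

namespace MeasureTheory.Measure

theorem bind_comp_map_of_leftInverse {α β γ : Type*} [MeasurableSpace α] [MeasurableSpace β]
    [MeasurableSpace γ] {f : β → α} {g : α → β} (hf : Measurable f) (hg : Measurable g)
    (hfg : Function.LeftInverse f g) (μ : Measure α) (K : α → Measure γ) :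
    ((μ.map g).bind fun b => K (f b)) = μ.bind K := by
  have hmap : (μ.map g).map f = μ := by rw [map_map hf hg, hfg.comp_eq_id, map_id]
  by_cases hK : AEMeasurable K μ
  · have hK' : AEMeasurable K ((μ.map g).map f) := by rwa [hmap]
    rw [bind, bind, ← Function.comp_def, ← hK'.map_map_of_aemeasurable hf.aemeasurable, hmap]
  · have hKf : ¬ AEMeasurable (fun b => K (f b)) (μ.map g) := fun h =>
      hK (by simpa [Function.comp_def, hfg _] using h.comp_measurable hg)
    rw [bind, bind, map_of_not_aemeasurable hK, map_of_not_aemeasurable hKf]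

section Pi

variable {ι : Type*} [Fintype ι] {α : ι → Type*} [∀ i, MeasurableSpace (α i)]
  (μ : ∀ i, Measure (α i))

theorem pi_setOf_apply_eq [DecidableEq ι] [∀ i, IsProbabilityMeasure (μ i)] (i : ι) (x : α i) :
    Measure.pi μ {ω | ω i = x} = μ i {x} := by
  rw [show {ω : ∀ i, α i | ω i = x} = Function.eval i ⁻¹' {x} from rfl,
    ← Set.univ_pi_update_univ, pi_pi, Fintype.prod_eq_single i fun j hj => by simp [hj]]
  simp

variable (p : ι → Prop) [DecidablePred p]

theorem pi_inter_setOf_restrict_compl_eq [∀ i, SigmaFinite (μ i)]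
    (c : ∀ j : {j // ¬ p j}, α j) (A : Set (∀ i, α i)) :
    Measure.pi μ ({ω | (fun j : {j // ¬ p j} => ω j) = c} ∩ A) =
      (Measure.pi fun j : Subtype p => μ j)
          ((fun y => (MeasurableEquiv.piEquivPiSubtypeProd α p).symm (y, c)) ⁻¹' A) *
        (Measure.pi fun j : {j // ¬ p j} => μ j) {c} := by
  set E := MeasurableEquiv.piEquivPiSubtypeProd α p
  have hset : {ω | (fun j : {j // ¬ p j} => ω j) = c} ∩ A =
      E ⁻¹' (((fun y => E.symm (y, c)) ⁻¹' A) ×ˢ {c}) := by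
    ext ω
    have hω : E.symm ((E ω).1, (E ω).2) = ω := E.symm_apply_apply ω
    change _ = c ∧ _ ↔ _ ∧ (E ω).2 = c
    constructor
    · rintro ⟨rfl, hA⟩
      exact ⟨(hω ▸ hA :), rfl⟩
    · rintro ⟨hA, rfl⟩
      exact ⟨rfl, hω ▸ hA⟩
  rw [hset, ← MeasurableEquiv.map_apply, (measurePreserving_piEquivPiSubtypeProd μ p).map_eq,
    prod_prod]

theorem cond_pi_setOf_restrict_compl_eq_map [∀ i, IsProbabilityMeasure (μ i)]
    (c : ∀ j : {j // ¬ p j}, α j)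
    (hc : Measure.pi μ {ω | (fun j : {j // ¬ p j} => ω j) = c} ≠ 0) :
    (Measure.pi μ)[|{ω | (fun j : {j // ¬ p j} => ω j) = c}] =
      (Measure.pi fun j : Subtype p => μ j).map
        fun y => (MeasurableEquiv.piEquivPiSubtypeProd α p).symm (y, c) := by
  have hmeas := pi_inter_setOf_restrict_compl_eq μ p c Set.univ
  rw [Set.inter_univ, Set.preimage_univ, measure_univ, one_mul] at hmeas
  ext A hA
  rw [cond_apply' hA, pi_inter_setOf_restrict_compl_eq, map_apply (by fun_prop) hA, hmeas,
    mul_comm, mul_assoc, ENNReal.mul_inv_cancel (hmeas ▸ hc) (measure_ne_top _ _), mul_one]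

end Pi

end MeasureTheory.Measure

theorem setOf_apply_eq_eq_setOf_restrict_ne {ι β : Type*} (i : ι) (x : β) :
    {ω : ι → β | ω i = x} = {ω | (fun j : {j // ¬ j ≠ i} => ω j) = fun _ => x} := by
  ext ω
  simp [funext_iff]

theorem ENNReal.le_ofReal_exp_two_mul_mul_add_of_le_of_le {a b c : ENNReal} {ε δ : ℝ}
    (hδ : 0 ≤ δ) (hab : a ≤ ENNReal.ofReal (Real.exp ε) * b + ENNReal.ofReal δ)
    (hbc : b ≤ ENNReal.ofReal (Real.exp ε) * c + ENNReal.ofReal δ) :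
    a ≤ ENNReal.ofReal (Real.exp (2 * ε)) * c + ENNReal.ofReal ((1 + Real.exp ε) * δ) := by
  have hexp : ENNReal.ofReal (Real.exp (2 * ε)) =
      ENNReal.ofReal (Real.exp ε) * ENNReal.ofReal (Real.exp ε) := by
    rw [← ENNReal.ofReal_mul (Real.exp_nonneg ε), ← Real.exp_add, two_mul]
  have hδ' : ENNReal.ofReal ((1 + Real.exp ε) * δ) =
      ENNReal.ofReal (Real.exp ε) * ENNReal.ofReal δ + ENNReal.ofReal δ := by
    rw [← ENNReal.ofReal_mul (Real.exp_nonneg ε),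
      ← ENNReal.ofReal_add (mul_nonneg (Real.exp_nonneg ε) hδ) hδ]
    ring_nf
  calc a ≤ ENNReal.ofReal (Real.exp ε) * b + ENNReal.ofReal δ := hab
    _ ≤ ENNReal.ofReal (Real.exp ε) * (ENNReal.ofReal (Real.exp ε) * c + ENNReal.ofReal δ)
        + ENNReal.ofReal δ := by gcongr
    _ = _ := by rw [hexp, hδ']; ring

/-- Simulation-based DDP implies the alternative two-row-values DDP definition
(with doubled ε and blown-up δ), for a database with independent rows. -/
theorem sim_ddp_implies_alt_ddp {U R : Type*} [MeasurableSpace U] [MeasurableSpace R]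
    (n : ℕ) (ν : Fin n → Measure U) [∀ i, IsProbabilityMeasure (ν i)]
    (M : (Fin n → U) → Measure R)
    (Sim : (i : Fin n) → ({j : Fin n // j ≠ i} → U) → Measure R)
    (ε δ : ℝ) (hδ : 0 ≤ δ)
    (hSim : ∀ (i : Fin n) (x : U), ν i {x} ≠ 0 → ∀ S : Set R,
      (((Measure.pi ν)[|{ω | ω i = x}]).bind M) S
          ≤ ENNReal.ofReal (Real.exp ε) *
              (((Measure.pi ν)[|{ω | ω i = x}]).bind fun ω => Sim i fun j => ω j.1) S
            + ENNReal.ofReal δ ∧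
        (((Measure.pi ν)[|{ω | ω i = x}]).bind fun ω => Sim i fun j => ω j.1) S
          ≤ ENNReal.ofReal (Real.exp ε) * (((Measure.pi ν)[|{ω | ω i = x}]).bind M) S
            + ENNReal.ofReal δ) :
    ∀ (i : Fin n) (x x' : U), ν i {x} ≠ 0 → ν i {x'} ≠ 0 → ∀ S : Set R,
      (((Measure.pi ν)[|{ω | ω i = x}]).bind M) S
        ≤ ENNReal.ofReal (Real.exp (2 * ε)) * (((Measure.pi ν)[|{ω | ω i = x'}]).bind M) S
          + ENNReal.ofReal ((1 + Real.exp ε) * δ) := by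
  intro i x x' hx hx' S
  have hSim_law : ∀ y : U, ν i {y} ≠ 0 →
      (((Measure.pi ν)[|{ω | ω i = y}]).bind fun ω => Sim i fun j => ω j.1) =
        (Measure.pi fun j : {j // j ≠ i} => ν j).bind (Sim i) := by
    intro y hy
    have hy' := Measure.pi_setOf_apply_eq ν i y ▸ hy
    rw [setOf_apply_eq_eq_setOf_restrict_ne] at hy' ⊢
    rw [Measure.cond_pi_setOf_restrict_compl_eq_map ν (· ≠ i) _ hy']
    exact Measure.bind_comp_map_of_leftInverse (by fun_prop) (by fun_prop)
      (fun _ => congrArg Prod.fst ((MeasurableEquiv.piEquivPiSubtypeProd _ _).apply_symm_apply _))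
      _ _
  have hx_sim := (hSim i x hx S).1
  rw [hSim_law x hx, ← hSim_law x' hx'] at hx_sim
  exact ENNReal.le_ofReal_exp_two_mul_mul_add_of_le_of_le hδ hx_sim (hSim i x' hx' S).2
end

section
/- (GSR representations are equivalent) Every generalized scoring rule in the (f, g) form — given by f : L(C) → ℝ^K and g mapping weak orders on {1,...,K} to candidates, with winner g(Ord(Σ_{V∈P} f(V))) — can be represented in the (H, g_H) hyperplane form, and conversely. Concretely: (a) given (f, g), define for each pair k_1 ≠ k_2 ≤ K the hyperplane h_{k_1,k_2} ∈ ℝ^{|L(C)|} with coordinate ([f(V)]_{k_1} − [f(V)]_{k_2}) at position V; then the sign vector (Sign(h_{k_1,k_2}·P)) determines the weak order Ord(f(P)), so a suitable g_H reproduces g. (b) Given (H, g_H) with H = {h_1,...,h_R}, define f(V) = (h_1·e_V, ..., h_R·e_V, 0) ∈ ℝ^{R+1}; then the weak order of the components of f(P) determines the sign of each h_k·P (by comparing component k with the last component, which is 0), so a suitable g reproduces g_H. -/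
/-!
The sign of `x` is determined by whether `x ≤ 0` and whether `0 ≤ x`. So for (a), the sign of
`h_{k₁,k₂} · P = f(P)_{k₁} - f(P)_{k₂}` records both comparisons between the two scores, and
for (b), comparing the `k`-th score `h_k · P` with the constant last score `0` in both directions
recovers the sign of `h_k · P`.
-/

open Finset

theorem sign_eq_sign_iff {α : Type*} [Zero α] [LinearOrder α] (a b : α) :
    SignType.sign a = SignType.sign b ↔ (a ≤ 0 ↔ b ≤ 0) ∧ (0 ≤ a ↔ 0 ≤ b) := by
  rcases lt_trichotomy a 0 with ha | ha | ha <;>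
  rcases lt_trichotomy b 0 with hb | hb | hb <;>
  simp [sign_neg, sign_pos, ha, hb, ha.le, hb.le, not_le_of_gt]

/-- The two representations of generalized scoring rules are equivalent.
(a) A rule factoring through the weak order of `f`-scores factors through the
sign pattern of the difference hyperplanes `h_{k₁,k₂} = (f(·)_{k₁} - f(·)_{k₂})`.
(b) A rule factoring through the sign pattern of hyperplanes `h_1,…,h_R`
factors through the weak order of the scores `f(V) = (h_1·e_V,…,h_R·e_V, 0)`. -/
theorem gsr_representations_equivalent :
    (∀ (d K : ℕ) (C : Type) (f : Fin d → Fin K → ℝ) (r : (Fin d → ℕ) → C),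
      (∀ P Q : Fin d → ℕ,
        (∀ k₁ k₂ : Fin K,
          ((∑ v, f v k₁ * (P v : ℝ)) ≤ (∑ v, f v k₂ * (P v : ℝ)) ↔
            (∑ v, f v k₁ * (Q v : ℝ)) ≤ (∑ v, f v k₂ * (Q v : ℝ)))) → r P = r Q) →
      (∀ P Q : Fin d → ℕ,
        (∀ k₁ k₂ : Fin K,
          SignType.sign (∑ v, (f v k₁ - f v k₂) * (P v : ℝ)) =
            SignType.sign (∑ v, (f v k₁ - f v k₂) * (Q v : ℝ))) → r P = r Q)) ∧
    (∀ (d R : ℕ) (C : Type) (hs : Fin R → Fin d → ℝ) (r : (Fin d → ℕ) → C),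
      (∀ P Q : Fin d → ℕ,
        (∀ k : Fin R,
          SignType.sign (∑ v, hs k v * (P v : ℝ)) =
            SignType.sign (∑ v, hs k v * (Q v : ℝ))) → r P = r Q) →
      (∀ P Q : Fin d → ℕ,
        (∀ k₁ k₂ : Fin (R + 1),
          ((∑ v, (Fin.lastCases (0 : ℝ) (fun j => hs j v) k₁) * (P v : ℝ)) ≤
              (∑ v, (Fin.lastCases (0 : ℝ) (fun j => hs j v) k₂) * (P v : ℝ)) ↔
            (∑ v, (Fin.lastCases (0 : ℝ) (fun j => hs j v) k₁) * (Q v : ℝ)) ≤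
              (∑ v, (Fin.lastCases (0 : ℝ) (fun j => hs j v) k₂) * (Q v : ℝ)))) →
        r P = r Q)) := by
  constructor
  · intro d K C f r hord P Q hsign
    refine hord P Q fun k₁ k₂ => ?_
    have h := ((sign_eq_sign_iff _ _).1 (hsign k₁ k₂)).1
    simpa only [sub_mul, sum_sub_distrib, sub_nonpos] using h
  · intro d R C hs r hsign P Q hord
    refine hsign P Q fun k => (sign_eq_sign_iff _ _).2 ?_
    have below := hord k.castSucc (Fin.last R)
    have above := hord (Fin.last R) k.castSucc
    simp only [Fin.lastCases_castSucc, Fin.lastCases_last, zero_mul, sum_const_zero]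
      at below above
    exact ⟨below, above⟩
end
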